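/- Let J ⊂ K[x_1,...,x_n] be an almost revlex ideal with R/J of Krull dimension δ. Then for every j with n-δ+2 ≤ j ≤ n, the variable x_j is not a zero-divisor on R/J. -/

import Mathlib

/-! If a minimal generator `γ` of `J` involved `x_j`, the almost revlex property would put
`x_i ^ deg γ` into `J` for every `i < j`. Then `x_1, …, x_{j-1}` are nilpotent in `R/J`, so the
reduced ring of `R/J` is a quotient of `K[x_j, …, x_n]` and `δ ≤ n - j + 1`, contradicting
`j ≥ n - δ + 2`. Hence no minimal generator involves `x_j`, so a monomial `x_j m` lies in `J` only if
`m` does; for a monomial ideal this says that `x_j` is a nonzerodivisor.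
-/

open Finset

/-- Total degree of a monomial (exponent vector). -/
def mdeg {n : ℕ} (α : Fin n →₀ ℕ) : ℕ := α.sum fun _ e => e

/-- A set of exponent vectors is the set of monomials of a monomial ideal. -/
def IsMonIdeal {n : ℕ} (S : Set (Fin n →₀ ℕ)) : Prop :=
  ∀ α ∈ S, ∀ β : Fin n →₀ ℕ, α + β ∈ S

/-- `α` is a minimal monomial generator of the monomial ideal with monomials `S`. -/
def MinGen {n : ℕ} (S : Set (Fin n →₀ ℕ)) (α : Fin n →₀ ℕ) : Prop :=
  α ∈ S ∧ ∀ β ∈ S, β ≤ α → β = α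

/-- Stable monomial ideal (variables ordered `x_1 ≻ ⋯ ≻ x_n`, i.e. index `0` largest). -/
def IsStable {n : ℕ} (S : Set (Fin n →₀ ℕ)) : Prop :=
  ∀ α ∈ S, ∀ m ∈ α.support, (∀ k ∈ α.support, k ≤ m) →
    ∀ i : Fin n, i < m → α - Finsupp.single m 1 + Finsupp.single i 1 ∈ S

def IsStronglyStable {n : ℕ} (S : Set (Fin n →₀ ℕ)) : Prop :=
  ∀ α ∈ S, ∀ i ∈ α.support, ∀ j : Fin n, j < i →
    α - Finsupp.single i 1 + Finsupp.single j 1 ∈ S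

/-- `drlLT α β` : `α` is smaller than `β` in degrevlex with `x_1 ≻ ⋯ ≻ x_n`. -/
def drlLT {n : ℕ} (α β : Fin n →₀ ℕ) : Prop :=
  mdeg α < mdeg β ∨ (mdeg α = mdeg β ∧ ∃ i : Fin n, β i < α i ∧ ∀ j : Fin n, i < j → α j = β j)

def IsAlmostRevLex {n : ℕ} (S : Set (Fin n →₀ ℕ)) : Prop :=
  IsMonIdeal S ∧ ∀ α, MinGen S α → ∀ β : Fin n →₀ ℕ, mdeg β = mdeg α → drlLT α β → β ∈ S

/-- Combinatorial Hilbert function of `R/J`: number of degree-`t` monomials outside `S`. -/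
noncomputable def hilbC {n : ℕ} (S : Set (Fin n →₀ ℕ)) (t : ℕ) : ℕ :=
  {α : Fin n →₀ ℕ | mdeg α = t ∧ α ∉ S}.ncard

/-- `fdiff H s t` is `Δ^s H (t)` with the convention `Δ^s H (0) = 1` for `s ≥ 1`. -/
def fdiff (H : ℕ → ℕ) : ℕ → ℕ → ℤ
  | 0, t => H t
  | _+1, 0 => 1
  | s+1, t+1 => fdiff H s (t+1) - fdiff H s t

open MvPolynomial

section KrullDimension

variable {R : Type*} [CommRing R]

theorem ringKrullDim_quotient_eq_of_le_radical {I J : Ideal R} (hIJ : I ≤ J) (hJ : J ≤ I.radical) :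
    ringKrullDim (R ⧸ J) = ringKrullDim (R ⧸ I) := by
  have hlocus : PrimeSpectrum.zeroLocus (J : Set R) = PrimeSpectrum.zeroLocus I :=
    (PrimeSpectrum.zeroLocus_anti_mono hIJ).antisymm
      (PrimeSpectrum.zeroLocus_radical I ▸ PrimeSpectrum.zeroLocus_anti_mono hJ)
  rw [ringKrullDim_quotient, ringKrullDim_quotient, hlocus]

namespace MvPolynomial

variable {σ : Type*}

theorem quotientMk_comp_rename_surjective {J : Ideal (MvPolynomial σ R)} {s : Set σ}
    (hJ : ∀ i ∉ s, X i ∈ J) :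
    Function.Surjective ((Ideal.Quotient.mk J).comp (rename ((↑) : s → σ)).toRingHom) := by
  intro p
  obtain ⟨f, rfl⟩ := Ideal.Quotient.mk_surjective p
  induction f using MvPolynomial.induction_on with
  | C a => exact ⟨C a, by simp⟩
  | add f g hf hg =>
    obtain ⟨f', hf'⟩ := hf
    obtain ⟨g', hg'⟩ := hg
    exact ⟨f' + g', by rw [map_add, hf', hg', map_add]⟩
  | mul_X f i hf =>
    obtain ⟨f', hf'⟩ := hf
    by_cases hi : i ∈ s
    · refine ⟨f' * X ⟨i, hi⟩, ?_⟩
      rw [map_mul, hf', map_mul]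
      simp
    · refine ⟨0, ?_⟩
      simp [Ideal.Quotient.eq_zero_iff_mem.2 (J.mul_mem_left f (hJ i hi))]

theorem ringKrullDim_quotient_le_of_X_mem_radical [IsNoetherianRing R]
    {I : Ideal (MvPolynomial σ R)} (s : Set σ) [Finite s] (hs : ∀ i ∉ s, X i ∈ I.radical) :
    ringKrullDim (MvPolynomial σ R ⧸ I) ≤ ringKrullDim R + Nat.card s := by
  set J := I ⊔ Ideal.span (X '' sᶜ)
  have hJ : J ≤ I.radical :=
    sup_le I.le_radical (Ideal.span_le.2 (by rintro _ ⟨i, hi, rfl⟩; exact hs i hi))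
  rw [← ringKrullDim_quotient_eq_of_le_radical le_sup_left hJ,
    ← MvPolynomial.ringKrullDim_of_isNoetherianRing]
  exact ringKrullDim_le_of_surjective _
    (quotientMk_comp_rename_surjective fun i hi => Ideal.mem_sup_right (Ideal.subset_span ⟨i, hi, rfl⟩))

end MvPolynomial

end KrullDimension

section MonomialIdeal

variable {n : ℕ} {S : Set (Fin n →₀ ℕ)}

theorem exists_minGen_le {α : Fin n →₀ ℕ} (hα : α ∈ S) : ∃ γ ≤ α, MinGen S γ := by
  obtain ⟨γ, hγα, hγS, hγmin⟩ := exists_minimal_le_of_wellFoundedLT (· ∈ S) α hα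
  exact ⟨γ, hγα, hγS, fun β hβ hβγ => le_antisymm hβγ (hγmin hβ hβγ)⟩

namespace IsMonIdeal

theorem mem_of_le (hS : IsMonIdeal S) {α β : Fin n →₀ ℕ} (hα : α ∈ S) (hαβ : α ≤ β) : β ∈ S :=
  add_tsub_cancel_of_le hαβ ▸ hS α hα (β - α)

theorem mem_span_monomial_iff {R : Type*} [CommSemiring R] (hS : IsMonIdeal S)
    {g : MvPolynomial (Fin n) R} :
    g ∈ Ideal.span ((fun α => monomial α (1 : R)) '' S) ↔ ∀ β ∈ g.support, β ∈ S := by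
  rw [mem_ideal_span_monomial_image]
  exact forall₂_congr fun β _ => ⟨fun ⟨α, hα, hαβ⟩ => hS.mem_of_le hα hαβ, fun hβ => ⟨β, hβ, le_rfl⟩⟩

theorem mem_of_single_add_mem (hS : IsMonIdeal S) {j : Fin n} (hj : ∀ γ, MinGen S γ → γ j = 0)
    {β : Fin n →₀ ℕ} (h : Finsupp.single j 1 + β ∈ S) : β ∈ S := by
  obtain ⟨γ, hγle, hγ⟩ := exists_minGen_le h
  refine hS.mem_of_le hγ.1 fun i => ?_
  rcases eq_or_ne i j with rfl | hij
  · simp [hj γ hγ]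
  · simpa [Finsupp.single_apply, hij.symm] using hγle i

theorem mem_span_of_X_mul_mem {R : Type*} [CommSemiring R] (hS : IsMonIdeal S) {j : Fin n}
    (hj : ∀ γ, MinGen S γ → γ j = 0) {g : MvPolynomial (Fin n) R}
    (hg : X j * g ∈ Ideal.span ((fun α => monomial α (1 : R)) '' S)) :
    g ∈ Ideal.span ((fun α => monomial α (1 : R)) '' S) := by
  rw [hS.mem_span_monomial_iff] at hg ⊢
  intro β hβ
  refine hS.mem_of_single_add_mem hj (hg _ ?_)
  rwa [mem_support_iff, coeff_X_mul, ← mem_support_iff]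

end IsMonIdeal

theorem mdeg_single (i : Fin n) (d : ℕ) : mdeg (Finsupp.single i d) = d := by
  simp [mdeg]

theorem drlLT_single_of_lt {γ : Fin n →₀ ℕ} {i k : Fin n} (hk : γ k ≠ 0) (hik : i < k) :
    drlLT γ (Finsupp.single i (mdeg γ)) := by
  obtain ⟨m, hm, hmax⟩ := γ.support.exists_max_image id ⟨k, Finsupp.mem_support_iff.2 hk⟩
  have him : i < m := hik.trans_le (hmax k (Finsupp.mem_support_iff.2 hk))
  refine Or.inr ⟨(mdeg_single i _).symm, m, ?_, fun l hml => ?_⟩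
  · simpa [Finsupp.single_apply, him.ne, Nat.pos_iff_ne_zero] using hm
  · have hl : l ∉ γ.support := fun hl => not_le.2 hml (hmax l hl)
    simp [Finsupp.notMem_support_iff.1 hl, (him.trans hml).ne]

theorem IsAlmostRevLex.single_mem (hS : IsAlmostRevLex S) {γ : Fin n →₀ ℕ} (hγ : MinGen S γ)
    {i k : Fin n} (hk : γ k ≠ 0) (hik : i < k) : Finsupp.single i (mdeg γ) ∈ S :=
  hS.2 γ hγ _ (mdeg_single i _) (drlLT_single_of_lt hk hik)

end MonomialIdeal

/-- Let `J ⊂ R = K[x_1,…,x_n]` be an almost revlex monomial ideal (with set of monomials `S`)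
such that `R/J` has Krull dimension `δ`.  Then for every variable `x_j` with
`n - δ + 2 ≤ j ≤ n` (1-based indexing, so 0-based index `j - 1 ≥ n - δ + 1`), `x_j` is not a
zero-divisor on `R/J`. -/
theorem almostRevLex_var_not_zeroDivisor (K : Type*) [Field K] {n : ℕ}
    (S : Set (Fin n →₀ ℕ)) (hS : IsAlmostRevLex S)
    (I : Ideal (MvPolynomial (Fin n) K))
    (hI : I = Ideal.span ((fun α => (monomial α (1 : K))) '' S))
    (δ : ℕ) (hdim : ringKrullDim (MvPolynomial (Fin n) K ⧸ I) = δ) :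
    ∀ j : Fin n, n - δ + 2 ≤ (j : ℕ) + 1 →
      ∀ g : MvPolynomial (Fin n) K, X j * g ∈ I → g ∈ I := by
  intro j hj g hg
  rw [hI] at hg ⊢
  refine hS.1.mem_span_of_X_mul_mem (fun γ hγ => ?_) hg
  by_contra hγj
  have hnil : ∀ i ∉ Set.Ici j, X i ∈ I.radical := fun i hi => by
    refine ⟨mdeg γ, ?_⟩
    rw [hI, X_pow_eq_monomial]
    exact Ideal.subset_span ⟨_, hS.single_mem hγ hγj (not_le.1 hi), rfl⟩
  have hdim_le : δ ≤ n - j := by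
    have h := ringKrullDim_quotient_le_of_X_mem_radical _ hnil
    rw [hdim, ringKrullDim_eq_zero_of_field, zero_add, Nat.card_eq_card_toFinset,
      Set.toFinset_Ici, Fin.card_Ici] at h
    exact_mod_cast h
  omega
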